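/- Define f, g : ℝ → ℝ by f(x) = exp(1/x) and g(x) = exp(−1/x²) for x < 0, and f(x) = g(x) = 0 for x ≥ 0. Let F ⊆ ℝ² be the union of the graphs of f and −f, and G ⊆ ℝ² the union of the graphs of g and −g. Then there exist no open neighbourhoods U and V of the origin in ℝ² and no C¹ diffeomorphism φ : U → V (continuously differentiable bijection with continuously differentiable inverse) such that φ(F ∩ U) = G ∩ V. -/
import Mathlib


/-- `f x = exp (1/x)` for `x < 0`, and `0` for `x ≥ 0`. -/
noncomputable def f (x : ℝ) : ℝ := if x < 0 then Real.exp (1 / x) else 0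

/-- `g x = exp (-1/x²)` for `x < 0`, and `0` for `x ≥ 0`. -/
noncomputable def g (x : ℝ) : ℝ := if x < 0 then Real.exp (-1 / x ^ 2) else 0

/-- `F` is the union of the graphs of `f` and `-f`. -/
noncomputable def F : Set (ℝ × ℝ) := {p | p.2 = f p.1 ∨ p.2 = -f p.1}

/-- `G` is the union of the graphs of `g` and `-g`. -/
noncomputable def G : Set (ℝ × ℝ) := {p | p.2 = g p.1 ∨ p.2 = -g p.1}

set_option maxHeartbeats 1600000
open Real Set
open Real Set

lemma exp_inv_le_neg {x : ℝ} (hx : x < 0) : Real.exp x⁻¹ ≤ -x := by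
  have h0 : (0:ℝ) < -x⁻¹ := by
    have : x⁻¹ < 0 := inv_lt_zero.mpr hx
    linarith
  have h1 : -x⁻¹ ≤ Real.exp (-x⁻¹) := by
    have := Real.add_one_le_exp (-x⁻¹); linarith
  have h2 : (Real.exp (-x⁻¹))⁻¹ ≤ (-x⁻¹)⁻¹ := inv_anti₀ h0 h1
  rw [← Real.exp_neg, neg_neg] at h2
  rwa [inv_neg, inv_inv] at h2

lemma exp_inv_le_sq {x : ℝ} (hx : x < 0) : Real.exp x⁻¹ ≤ 4 * x ^ 2 := by
  have h2x : 2 * x < 0 := by linarith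
  have h : Real.exp x⁻¹ = Real.exp ((2*x)⁻¹) * Real.exp ((2*x)⁻¹) := by
    rw [← Real.exp_add]
    congr 1
    field_simp
    ring
  rw [h]
  have hb := exp_inv_le_neg h2x
  have hpos := (Real.exp_pos ((2*x)⁻¹)).le
  calc Real.exp ((2*x)⁻¹) * Real.exp ((2*x)⁻¹) ≤ (-(2*x)) * (-(2*x)) :=
        mul_le_mul hb hb hpos (by linarith)
    _ = 4 * x ^ 2 := by ring


lemma f_nonneg (x : ℝ) : 0 ≤ f x := by
  unfold f; split
  · exact (Real.exp_pos _).le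
  · exact le_refl 0

lemma f_of_neg {x : ℝ} (hx : x < 0) : f x = Real.exp x⁻¹ := by
  unfold f; rw [if_pos hx, one_div]

lemma f_of_nonneg {x : ℝ} (hx : 0 ≤ x) : f x = 0 := by
  unfold f; rw [if_neg (not_lt.mpr hx)]

lemma f_le_abs (x : ℝ) : f x ≤ |x| := by
  rcases lt_or_ge x 0 with h | h
  · rw [f_of_neg h, abs_of_neg h]; exact exp_inv_le_neg h
  · rw [f_of_nonneg h]; exact abs_nonneg x

lemma f_pos_neg {x : ℝ} (h : 0 < f x) : x < 0 := by
  by_contra hc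
  rw [f_of_nonneg (not_lt.mp hc)] at h
  exact lt_irrefl 0 h

lemma f_lip : LipschitzWith 4 f := by
  have aux : ∀ x y : ℝ, x ≤ y → |f y - f x| ≤ 4 * (y - x) := by
    intro x y hxy
    rcases le_or_gt 0 x with hx | hx
    · rw [f_of_nonneg hx, f_of_nonneg (hx.trans hxy)]
      simp; linarith
    · rcases le_or_gt 0 y with hy | hy
      · rw [f_of_nonneg hy, f_of_neg hx]
        rw [abs_of_nonpos (by simp [(Real.exp_pos _).le])]
        have := exp_inv_le_neg hx
        linarith
      · -- both negative, MVT
        have key : ∀ z ∈ Iio (0:ℝ), HasDerivWithinAt f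
            (Real.exp z⁻¹ * (-(z ^ 2)⁻¹)) (Iio 0) z := by
          intro z hz
          have hd : HasDerivAt (fun w : ℝ => Real.exp w⁻¹)
              (Real.exp z⁻¹ * (-(z ^ 2)⁻¹)) z :=
            (hasDerivAt_inv (ne_of_lt hz)).exp
          have : f =ᶠ[nhds z] (fun w : ℝ => Real.exp w⁻¹) := by
            filter_upwards [Iio_mem_nhds hz] with w hw
            exact f_of_neg hw
          exact (hd.congr_of_eventuallyEq this).hasDerivWithinAt
        have hbound : ∀ z ∈ Iio (0:ℝ), ‖Real.exp z⁻¹ * (-(z ^ 2)⁻¹)‖ ≤ 4 := by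
          intro z hz
          have hzne : z ≠ 0 := ne_of_lt hz
          have hz2 : (0:ℝ) < z ^ 2 := by positivity
          rw [norm_mul, norm_neg, norm_inv]
          rw [Real.norm_eq_abs, Real.norm_eq_abs, abs_of_pos (Real.exp_pos _),
            abs_of_pos hz2]
          rw [mul_inv_le_iff₀ hz2]
          have := exp_inv_le_sq hz
          linarith
        have := Convex.norm_image_sub_le_of_norm_hasDerivWithin_le key hbound
          (convex_Iio 0) (mem_Iio.mpr hx) (mem_Iio.mpr hy)
        rw [Real.norm_eq_abs, Real.norm_eq_abs] at this
        calc |f y - f x| ≤ 4 * |y - x| := this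
          _ = 4 * (y - x) := by rw [abs_of_nonneg (by linarith)]
  apply LipschitzWith.of_dist_le_mul
  intro x y
  rcases le_total x y with h | h
  · rw [Real.dist_eq, Real.dist_eq, abs_sub_comm (f x) (f y),
      abs_of_nonpos (by linarith : x - y ≤ 0)]
    have := aux x y h
    push_cast
    linarith
  · rw [Real.dist_eq, Real.dist_eq, abs_of_nonneg (by linarith : (0:ℝ) ≤ x - y)]
    have := aux y x h
    push_cast
    linarith



lemma g_of_neg {u : ℝ} (hu : u < 0) : g u = Real.exp (-1 / u ^ 2) := if_pos hu

lemma g_pos {u : ℝ} (hu : u < 0) : 0 < g u := by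
  rw [g_of_neg hu]; exact Real.exp_pos _

lemma g_le_sq (u : ℝ) : g u ≤ u ^ 2 := by
  unfold g; split
  · rename_i hu
    have h2 : -u ^ 2 < 0 := by
      have : u ≠ 0 := ne_of_lt hu
      have : (0:ℝ) < u ^ 2 := by positivity
      linarith
    have := exp_inv_le_neg h2
    rw [neg_neg] at this
    calc Real.exp (-1 / u ^ 2) = Real.exp ((-u ^ 2)⁻¹) := by
          congr 1
          rw [inv_neg]
          field_simp
      _ ≤ u ^ 2 := this
  · positivity

lemma gs_nonneg {u : ℝ} : 0 ≤ g u := by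
  unfold g; split
  · exact (Real.exp_pos _).le
  · exact le_refl 0

lemma branch_mem {s x : ℝ} (hs : s = 1 ∨ s = -1) : (x, s * f x) ∈ F := by
  rcases hs with h | h <;> simp [F, h]

/-- straight path along one branch of `F` -/
lemma lip_graph (s a b : ℝ) (hs : s = 1 ∨ s = -1) :
    ∃ γ : ℝ → ℝ × ℝ, γ 0 = (a, s * f a) ∧ γ 1 = (b, s * f b) ∧
      (∀ t, (γ t).1 = a + t * (b - a) ∧ (γ t).2 = s * f ((γ t).1)) ∧
      LipschitzWith (4 * ‖b - a‖₊) γ := by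
  classical
  refine ⟨fun t => (a + t * (b - a), s * f (a + t * (b - a))), by simp, by simp, fun t => ⟨rfl, rfl⟩, ?_⟩
  apply LipschitzWith.of_dist_le_mul
  intro t t'
  have habs : |s| = 1 := by rcases hs with h | h <;> simp [h]
  have hK : ((4 * ‖b - a‖₊ : NNReal) : ℝ) = 4 * |b - a| := by
    push_cast
    rw [Real.norm_eq_abs]
  rw [Prod.dist_eq, hK]
  have hx : dist (a + t * (b - a)) (a + t' * (b - a)) = |b - a| * dist t t' := by
    rw [Real.dist_eq, Real.dist_eq,
      show a + t * (b - a) - (a + t' * (b - a)) = (b - a) * (t - t') by ring, abs_mul]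
  have hy : dist (s * f (a + t * (b - a))) (s * f (a + t' * (b - a)))
      ≤ 4 * (|b - a| * dist t t') := by
    rw [Real.dist_eq, show s * f (a + t * (b - a)) - s * f (a + t' * (b - a))
      = s * (f (a + t * (b - a)) - f (a + t' * (b - a))) by ring, abs_mul, habs, one_mul]
    have h4 := f_lip.dist_le_mul (a + t * (b - a)) (a + t' * (b - a))
    rw [Real.dist_eq, Real.dist_eq] at h4
    push_cast at h4
    have hxx : |a + t * (b - a) - (a + t' * (b - a))| = |b - a| * dist t t' := by
      rw [Real.dist_eq,
        show a + t * (b - a) - (a + t' * (b - a)) = (b - a) * (t - t') by ring, abs_mul]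
    rw [hxx] at h4
    linarith
  apply max_le
  · rw [hx]
    have : (0:ℝ) ≤ |b - a| * dist t t' := by positivity
    nlinarith [dist_nonneg (x := t) (y := t')]
  · exact hy.trans_eq (mul_assoc 4 |b - a| (dist t t')).symm

lemma lip_glue {γ₁ γ₂ : ℝ → ℝ × ℝ} {K : NNReal} (h₁ : LipschitzWith K γ₁)
    (h₂ : LipschitzWith K γ₂) (h : γ₁ 1 = γ₂ 0) :
    LipschitzWith (2 * K) (fun t => if t ≤ 1/2 then γ₁ (2 * t) else γ₂ (2 * t - 1)) := by
  apply LipschitzWith.of_dist_le_mul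
  have key : ∀ t t' : ℝ, t ≤ t' →
      dist (if t ≤ 1/2 then γ₁ (2 * t) else γ₂ (2 * t - 1))
        (if t' ≤ 1/2 then γ₁ (2 * t') else γ₂ (2 * t' - 1)) ≤ 2 * (K : ℝ) * dist t t' := by
    intro t t' htt
    by_cases h1 : t ≤ 1/2 <;> by_cases h2 : t' ≤ 1/2
    · rw [if_pos h1, if_pos h2]
      calc dist (γ₁ (2 * t)) (γ₁ (2 * t')) ≤ K * dist (2 * t) (2 * t') := h₁.dist_le_mul _ _
        _ = 2 * K * dist t t' := by
            rw [Real.dist_eq, Real.dist_eq, show 2*t - 2*t' = 2*(t-t') by ring, abs_mul]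
            simp; ring
    · rw [if_pos h1, if_neg h2]
      have e1 : dist (γ₁ (2 * t)) (γ₁ 1) ≤ K * (1 - 2*t) := by
        calc dist (γ₁ (2*t)) (γ₁ 1) ≤ K * dist (2*t) 1 := h₁.dist_le_mul _ _
          _ = K * (1 - 2*t) := by
              rw [Real.dist_eq, abs_of_nonpos (by linarith)]; ring
      have e2 : dist (γ₂ 0) (γ₂ (2 * t' - 1)) ≤ K * (2*t' - 1) := by
        calc dist (γ₂ 0) (γ₂ (2*t'-1)) ≤ K * dist 0 (2*t'-1) := h₂.dist_le_mul _ _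
          _ = K * (2*t' - 1) := by
              rw [Real.dist_eq, abs_of_nonpos (by linarith)]; ring
      calc dist (γ₁ (2 * t)) (γ₂ (2 * t' - 1))
          ≤ dist (γ₁ (2 * t)) (γ₁ 1) + dist (γ₂ 0) (γ₂ (2 * t' - 1)) := by
            rw [h]; exact dist_triangle _ _ _
        _ ≤ K * (1 - 2*t) + K * (2*t' - 1) := add_le_add e1 e2
        _ ≤ 2 * K * dist t t' := by
            rw [Real.dist_eq, abs_of_nonpos (by linarith)]
            nlinarith [K.coe_nonneg]
    · exact absurd (htt.trans h2) h1
    · rw [if_neg h1, if_neg h2]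
      calc dist (γ₂ (2*t-1)) (γ₂ (2*t'-1)) ≤ K * dist (2*t-1) (2*t'-1) := h₂.dist_le_mul _ _
        _ = 2 * K * dist t t' := by
            rw [Real.dist_eq, Real.dist_eq, show 2*t-1 - (2*t'-1) = 2*(t-t') by ring, abs_mul]
            simp; ring
  intro t t'
  have hco : ((2 * K : NNReal) : ℝ) = 2 * (K : ℝ) := by push_cast; ring
  rw [hco]
  rcases le_total t t' with h' | h'
  · exact key t t' h'
  · rw [dist_comm, dist_comm t t']
    exact key t' t h'

lemma g_path_lb {u : ℝ} (hu : u < 0) {σ : ℝ → ℝ × ℝ} {M : NNReal}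
    (hσ : LipschitzOnWith M σ (Icc 0 1))
    (h0 : σ 0 = (u, g u)) (h1 : σ 1 = (u, -g u))
    (hG : ∀ t ∈ Icc (0:ℝ) 1, σ t ∈ G) : 2 * (-u) ≤ M := by
  have hcont : ContinuousOn (fun t => (σ t).2) (Icc 0 1) :=
    continuous_snd.comp_continuousOn hσ.continuousOn
  have hmem : (0:ℝ) ∈ Icc ((fun t => (σ t).2) 1) ((fun t => (σ t).2) 0) := by
    simp only [h0, h1]
    constructor
    · simp; linarith [g_pos hu]
    · simp [le_of_lt (g_pos hu)]
  obtain ⟨t₀, ht₀, hval⟩ := intermediate_value_Icc' (by norm_num : (0:ℝ) ≤ 1) hcont hmem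
  simp only at hval
  have hpG := hG t₀ ht₀
  have hx : 0 ≤ (σ t₀).1 := by
    by_contra hc
    push_neg at hc
    have hgp := g_pos hc
    rcases hpG with h | h
    · rw [hval] at h; linarith
    · rw [hval] at h; linarith
  have d1 : -u ≤ (M : ℝ) * t₀ := by
    have hd := hσ.dist_le_mul 0 (left_mem_Icc.mpr zero_le_one) t₀ ht₀
    have hfst : dist ((σ 0).1) ((σ t₀).1) ≤ dist (σ 0) (σ t₀) := by
      rw [Prod.dist_eq]; exact le_max_left _ _
    have h01 : (σ 0).1 = u := by rw [h0]
    rw [h01] at hfst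
    have hdd : dist u ((σ t₀).1) ≤ (M:ℝ) * t₀ := by
      refine hfst.trans (hd.trans ?_)
      rw [Real.dist_eq, abs_of_nonpos (by linarith [ht₀.1] : (0:ℝ) - t₀ ≤ 0)]
      apply le_of_eq; ring
    rw [Real.dist_eq] at hdd
    linarith [neg_abs_le (u - (σ t₀).1), hx]
  have d2 : -u ≤ (M : ℝ) * (1 - t₀) := by
    have hd := hσ.dist_le_mul t₀ ht₀ 1 (right_mem_Icc.mpr zero_le_one)
    have hfst : dist ((σ t₀).1) ((σ 1).1) ≤ dist (σ t₀) (σ 1) := by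
      rw [Prod.dist_eq]; exact le_max_left _ _
    have h11 : (σ 1).1 = u := by rw [h1]
    rw [h11] at hfst
    have hdd : dist ((σ t₀).1) u ≤ (M:ℝ) * (1 - t₀) := by
      refine hfst.trans (hd.trans ?_)
      rw [Real.dist_eq, abs_of_nonpos (by linarith [ht₀.2] : t₀ - 1 ≤ 0)]
      apply le_of_eq; ring
    rw [Real.dist_eq] at hdd
    linarith [neg_abs_le ((σ t₀).1 - u), le_abs_self ((σ t₀).1 - u), hx]
  linarith

lemma lipOn_weaken {α β : Type*} [PseudoEMetricSpace α] [PseudoEMetricSpace β]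
    {K K' : NNReal} {f : α → β} {s : Set α} (h : LipschitzOnWith K f s) (hK : K ≤ K') :
    LipschitzOnWith K' f s :=
  fun x hx y hy => le_trans (h hx hy) (mul_le_mul_left (ENNReal.coe_le_coe.mpr hK) _)

lemma comp_lipOn {φ : ℝ × ℝ → ℝ × ℝ} {γ : ℝ → ℝ × ℝ} {Λ K : NNReal} {T : Set (ℝ × ℝ)}
    (hφ : LipschitzOnWith Λ φ T) (hγ : LipschitzWith K γ)
    (hmem : ∀ t ∈ Icc (0:ℝ) 1, γ t ∈ T) :
    LipschitzOnWith (Λ * K) (fun t => φ (γ t)) (Icc 0 1) := by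
  rw [lipschitzOnWith_iff_dist_le_mul]
  intro x hx y hy
  calc dist (φ (γ x)) (φ (γ y)) ≤ Λ * dist (γ x) (γ y) :=
        hφ.dist_le_mul _ (hmem x hx) _ (hmem y hy)
    _ ≤ Λ * (K * dist x y) := by
        have := hγ.dist_le_mul x y
        have h0 : (0:ℝ) ≤ Λ := Λ.coe_nonneg
        nlinarith
    _ = (Λ * K : NNReal) * dist x y := by push_cast; ring

lemma mem_F_of_branch {p : ℝ × ℝ} {s : ℝ} (hs : s = 1 ∨ s = -1) (h : p.2 = s * f p.1) :
    p ∈ F := by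
  rcases hs with h' | h' <;> subst h'
  · left; simpa using h
  · right; simpa using h

lemma F_cases {p q : ℝ × ℝ} (hp : p ∈ F) (hq : q ∈ F) :
    (∃ s, (s = 1 ∨ s = -1) ∧ p.2 = s * f p.1 ∧ q.2 = s * f q.1) ∨
    (∃ s, (s = 1 ∨ s = -1) ∧ p.2 = s * f p.1 ∧ q.2 = -s * f q.1 ∧
      0 < f p.1 ∧ 0 < f q.1) := by
  have hfp := f_nonneg p.1
  have hfq := f_nonneg q.1
  rcases hp with h1 | h1 <;> rcases hq with h2 | h2
  · exact Or.inl ⟨1, Or.inl rfl, by simpa using h1, by simpa using h2⟩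
  · rcases eq_or_lt_of_le hfq with he | hq0
    · exact Or.inl ⟨1, Or.inl rfl, by simpa using h1, by rw [h2, ← he]; simp⟩
    · rcases eq_or_lt_of_le hfp with he | hp0
      · refine Or.inl ⟨-1, Or.inr rfl, ?_, by simpa using h2⟩
        rw [h1, ← he]; simp
      · exact Or.inr ⟨1, Or.inl rfl, by simpa using h1, by simpa using h2, hp0, hq0⟩
  · rcases eq_or_lt_of_le hfq with he | hq0
    · exact Or.inl ⟨-1, Or.inr rfl, by simpa using h1, by rw [h2, ← he]; simp⟩
    · rcases eq_or_lt_of_le hfp with he | hp0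
      · refine Or.inl ⟨1, Or.inl rfl, ?_, by simpa using h2⟩
        rw [h1, ← he]; simp
      · refine Or.inr ⟨-1, Or.inr rfl, by simpa using h1, ?_, hp0, hq0⟩
        rw [h2]; ring_nf
  · exact Or.inl ⟨-1, Or.inr rfl, by simpa using h1, by simpa using h2⟩

lemma fst_dist_le (p q : ℝ × ℝ) : |p.1 - q.1| ≤ dist p q := by
  rw [Prod.dist_eq, ← Real.dist_eq]; exact le_max_left _ _

lemma snd_dist_le (p q : ℝ × ℝ) : |p.2 - q.2| ≤ dist p q := by
  rw [Prod.dist_eq, ← Real.dist_eq]; exact le_max_right _ _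

lemma pair_dist_le {x y r : ℝ} (hx : |x| ≤ r) (hy : |y| ≤ r) :
    dist ((x, y) : ℝ × ℝ) ((0:ℝ), (0:ℝ)) ≤ r := by
  rw [Prod.dist_eq]
  apply max_le <;> simp [Real.dist_eq] <;> assumption

lemma contain_step {γ : ℝ → ℝ × ℝ} {Kγ : NNReal} (hγlip : LipschitzWith Kγ γ)
    {z₀ A : ℝ × ℝ} {r₁ : ℝ} (hA : γ 0 = A) (hd : (Kγ:ℝ) + dist A z₀ < r₁) :
    ∀ t ∈ Icc (0:ℝ) 1, γ t ∈ Metric.ball z₀ r₁ := by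
  intro t ht
  have h1 := hγlip.dist_le_mul t 0
  rw [Real.dist_eq, sub_zero, abs_of_nonneg ht.1] at h1
  have h2 : dist (γ t) (γ 0) ≤ (Kγ:ℝ) := by
    refine h1.trans ?_
    nlinarith [Kγ.coe_nonneg, ht.2]
  rw [Metric.mem_ball]
  calc dist (γ t) z₀ ≤ dist (γ t) (γ 0) + dist (γ 0) z₀ := dist_triangle _ _ _
    _ ≤ (Kγ:ℝ) + dist A z₀ := by rw [hA] at h2 ⊢; linarith
    _ < r₁ := hd

lemma final_step {U V : Set (ℝ × ℝ)} {φ : ℝ × ℝ → ℝ × ℝ} (him : φ '' (F ∩ U) = G ∩ V)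
    {z₀ : ℝ × ℝ} {r₁ : ℝ} {Λ Kγ : NNReal} (hφlip : LipschitzOnWith Λ φ (Metric.ball z₀ r₁))
    (hballU : Metric.ball z₀ r₁ ⊆ U)
    {γ : ℝ → ℝ × ℝ} (hγlip : LipschitzWith Kγ γ) (hγF : ∀ t, γ t ∈ F)
    {u : ℝ} (hu : u < 0)
    (hγ0 : φ (γ 0) = (u, g u)) (hγ1 : φ (γ 1) = (u, -g u))
    (hcont : ∀ t ∈ Icc (0:ℝ) 1, γ t ∈ Metric.ball z₀ r₁) :
    2 * (-u) ≤ (Λ:ℝ) * (Kγ:ℝ) := by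
  have hσlip := comp_lipOn hφlip hγlip hcont
  have hrange : ∀ t ∈ Icc (0:ℝ) 1, φ (γ t) ∈ G := by
    intro t ht
    have : φ (γ t) ∈ φ '' (F ∩ U) := ⟨γ t, ⟨hγF t, hballU (hcont t ht)⟩, rfl⟩
    rw [him] at this
    exact this.1
  have h := g_path_lb hu hσlip hγ0 hγ1 hrange
  calc 2 * (-u) ≤ ((Λ * Kγ : NNReal) : ℝ) := h
    _ = (Λ:ℝ) * (Kγ:ℝ) := by push_cast; ring


/-- There are no open neighbourhoods `U`, `V` of the origin and no C¹ diffeomorphism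
`φ : U → V` (with C¹ inverse `ψ`) such that `φ (F ∩ U) = G ∩ V`. -/
theorem no_local_C1_diffeo_F_to_G :
    ¬ ∃ (U V : Set (ℝ × ℝ)) (φ ψ : ℝ × ℝ → ℝ × ℝ),
      IsOpen U ∧ IsOpen V ∧ ((0 : ℝ), (0 : ℝ)) ∈ U ∧ ((0 : ℝ), (0 : ℝ)) ∈ V ∧
      ContDiffOn ℝ 1 φ U ∧ ContDiffOn ℝ 1 ψ V ∧
      Set.MapsTo φ U V ∧ Set.MapsTo ψ V U ∧
      (∀ p ∈ U, ψ (φ p) = p) ∧ (∀ q ∈ V, φ (ψ q) = q) ∧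
      φ '' (F ∩ U) = G ∩ V := by
  rintro ⟨U, V, φ, ψ, hU, hV, hU0, hV0, hφC, hψC, hφm, hψm, hψφ, hφψ, him⟩
  obtain ⟨Kψ, t₀, ht₀, hlipψ0⟩ := (hψC.contDiffAt (hV.mem_nhds hV0)).exists_lipschitzOnWith
  obtain ⟨r₀, hr₀, hball₀⟩ := Metric.mem_nhds_iff.mp (Filter.inter_mem ht₀ (hV.mem_nhds hV0))
  have hz₀U : ψ ((0:ℝ), (0:ℝ)) ∈ U := hψm hV0
  obtain ⟨Kφ, t₁, ht₁, hlipφ0⟩ := (hφC.contDiffAt (hU.mem_nhds hz₀U)).exists_lipschitzOnWith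
  obtain ⟨r₁, hr₁, hball₁⟩ := Metric.mem_nhds_iff.mp (Filter.inter_mem ht₁ (hU.mem_nhds hz₀U))
  set z₀ := ψ ((0:ℝ), (0:ℝ)) with hz₀def
  set Λ : NNReal := Kφ + Kψ + 1 with hΛdef
  have hKφΛ : Kφ ≤ Λ := le_self_add.trans le_self_add
  have hKψΛ : Kψ ≤ Λ := le_add_self.trans le_self_add
  set L : ℝ := (Λ : ℝ) with hLdef
  have hL1 : (1:ℝ) ≤ L := by
    rw [hLdef, hΛdef]; push_cast; linarith [Kφ.coe_nonneg, Kψ.coe_nonneg]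
  have hL0 : (0:ℝ) < L := lt_of_lt_of_le one_pos hL1
  have hφlip : LipschitzOnWith Λ φ (Metric.ball z₀ r₁) :=
    lipOn_weaken (hlipφ0.mono (fun x hx => (hball₁ hx).1)) hKφΛ
  have hψlip : LipschitzOnWith Λ ψ (Metric.ball ((0:ℝ),(0:ℝ)) r₀) :=
    lipOn_weaken (hlipψ0.mono (fun x hx => (hball₀ hx).1)) hKψΛ
  have hballU : Metric.ball z₀ r₁ ⊆ U := fun x hx => (hball₁ hx).2
  have hballV : Metric.ball ((0:ℝ),(0:ℝ)) r₀ ⊆ V := fun x hx => (hball₀ hx).2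
  set C : ℝ := max (Real.log (2 * L)) 0 with hCdef
  have hC0 : 0 ≤ C := le_max_right _ _
  set ε : ℝ := min (min 1 r₀)
    (min (r₁ / (16 + 9 * L)) (min (1 / (4 * L^2 + 8 * L)) (1 / (2 * C + 2)))) with hεdef
  have hε : 0 < ε := by
    refine lt_min (lt_min one_pos hr₀) (lt_min ?_ (lt_min ?_ ?_)) <;> positivity
  set ru : ℝ := ε / 2 with hrudef
  set u : ℝ := -ru with hudef
  have hru0 : 0 < ru := by positivity
  have hruε : ru < ε := by rw [hrudef]; linarith
  have hu : u < 0 := by rw [hudef]; linarith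
  have hru1 : ru ≤ 1 := le_trans hruε.le ((min_le_left _ _).trans (min_le_left _ _))
  have hrur₀ : ru < r₀ := lt_of_lt_of_le hruε ((min_le_left _ _).trans (min_le_right _ _))
  have h3 : (16 + 9 * L) * ru < r₁ := by
    have h := lt_of_lt_of_le hruε ((min_le_right _ _).trans (min_le_left _ _))
    rw [lt_div_iff₀ (by positivity)] at h; linarith
  have h4 : (4 * L^2 + 8 * L) * ru < 1 := by
    have h := lt_of_lt_of_le hruε
      ((min_le_right _ _).trans ((min_le_right _ _).trans (min_le_left _ _)))
    rw [lt_div_iff₀ (by positivity)] at h; linarith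
  have h5 : (2 * C + 2) * ru < 1 := by
    have h := lt_of_lt_of_le hruε
      ((min_le_right _ _).trans ((min_le_right _ _).trans (min_le_right _ _)))
    rw [lt_div_iff₀ (by positivity)] at h; linarith
  have hu2 : u^2 = ru^2 := by rw [hudef]; ring
  have hu2ru : u^2 ≤ ru := by rw [hu2]; nlinarith
  have hgu : g u ≤ ru := (g_le_sq u).trans hu2ru
  have hgupos : 0 < g u := g_pos hu
  have habsu : |u| = ru := by rw [hudef, abs_neg, abs_of_pos hru0]
  -- the two points on G
  have hq1d : dist ((u, g u) : ℝ × ℝ) ((0:ℝ),(0:ℝ)) ≤ ru :=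
    pair_dist_le (le_of_eq habsu) (by rw [abs_of_pos hgupos]; exact hgu)
  have hq2d : dist ((u, -g u) : ℝ × ℝ) ((0:ℝ),(0:ℝ)) ≤ ru :=
    pair_dist_le (le_of_eq habsu) (by rw [abs_neg, abs_of_pos hgupos]; exact hgu)
  have hq1b : ((u, g u) : ℝ × ℝ) ∈ Metric.ball ((0:ℝ),(0:ℝ)) r₀ :=
    Metric.mem_ball.mpr (lt_of_le_of_lt hq1d hrur₀)
  have hq2b : ((u, -g u) : ℝ × ℝ) ∈ Metric.ball ((0:ℝ),(0:ℝ)) r₀ :=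
    Metric.mem_ball.mpr (lt_of_le_of_lt hq2d hrur₀)
  have h00b : ((0:ℝ),(0:ℝ)) ∈ Metric.ball ((0:ℝ),(0:ℝ)) r₀ := Metric.mem_ball_self hr₀
  have hq1V : ((u, g u) : ℝ × ℝ) ∈ V := hballV hq1b
  have hq2V : ((u, -g u) : ℝ × ℝ) ∈ V := hballV hq2b
  -- preimages on F
  set A := ψ (u, g u) with hAdef
  set B := ψ (u, -g u) with hBdef
  have hAF : A ∈ F := by
    have hmem : ((u, g u) : ℝ × ℝ) ∈ G ∩ V := ⟨Or.inl rfl, hq1V⟩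
    rw [← him] at hmem
    obtain ⟨p, ⟨hpF, hpU⟩, hpe⟩ := hmem
    have : A = p := by rw [hAdef, ← hpe, hψφ p hpU]
    rwa [this]
  have hBF : B ∈ F := by
    have hmem : ((u, -g u) : ℝ × ℝ) ∈ G ∩ V := ⟨Or.inr (by simp), hq2V⟩
    rw [← him] at hmem
    obtain ⟨p, ⟨hpF, hpU⟩, hpe⟩ := hmem
    have : B = p := by rw [hBdef, ← hpe, hψφ p hpU]
    rwa [this]
  have hq12 : dist ((u, g u) : ℝ × ℝ) ((u, -g u) : ℝ × ℝ) = 2 * g u := by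
    rw [Prod.dist_eq]
    simp [Real.dist_eq, abs_of_pos hgupos, abs_of_nonneg (le_of_lt hgupos)]
    rw [abs_of_pos (by linarith : (0:ℝ) < g u + g u)]; ring
  have hAB : dist A B ≤ L * (2 * g u) := by
    have h := hψlip.dist_le_mul _ hq1b _ hq2b
    rw [hq12] at h; exact h
  have hAz : dist A z₀ ≤ L * ru := by
    have h := hψlip.dist_le_mul _ hq1b _ h00b
    refine h.trans ?_
    exact mul_le_mul_of_nonneg_left hq1d hL0.le
  have hφA : φ A = (u, g u) := by rw [hAdef]; exact hφψ _ hq1V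
  have hφB : φ B = (u, -g u) := by rw [hBdef]; exact hφψ _ hq2V
  have hnu : -u = ru := by rw [hudef]; ring
  have hgu2 : g u ≤ ru^2 := (g_le_sq u).trans (le_of_eq hu2)
  have hune : u ≠ 0 := ne_of_lt hu
  clear_value z₀ Λ L C ε ru u A B
  rcases F_cases hAF hBF with ⟨s, hs, hA2, hB2⟩ | ⟨s, hs, hA2, hB2, hfa, hfb⟩
  · -- same branch
    obtain ⟨γ, hγ0, hγ1, hγc, hγlip⟩ := lip_graph s A.1 B.1 hs
    have hγ0A : γ 0 = A := by rw [hγ0, ← hA2, Prod.mk.eta]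
    have hγ1B : γ 1 = B := by rw [hγ1, ← hB2, Prod.mk.eta]
    have hγF : ∀ t, γ t ∈ F := fun t => mem_F_of_branch hs (hγc t).2
    have hKco : ((4 * ‖B.1 - A.1‖₊ : NNReal) : ℝ) = 4 * |B.1 - A.1| := by
      push_cast; rw [Real.norm_eq_abs]
    have hba : |B.1 - A.1| ≤ L * (2 * g u) := by
      have h := fst_dist_le A B
      rw [abs_sub_comm] at h
      linarith
    have hKle : ((4 * ‖B.1 - A.1‖₊ : NNReal) : ℝ) ≤ 8 * L * g u := by
      rw [hKco]; linarith
    have hLru : (0:ℝ) ≤ L * ru := mul_nonneg hL0.le hru0.le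
    have e1 : (8 * L) * g u ≤ (8 * L) * ru :=
      mul_le_mul_of_nonneg_left hgu (by linarith : (0:ℝ) ≤ 8 * L)
    have e2 : (16 + 9 * L) * ru = 16 * ru + 9 * (L * ru) := by ring
    have hcont := contain_step hγlip hγ0A (by
      rw [e2] at h3; linarith :
      ((4 * ‖B.1 - A.1‖₊ : NNReal) : ℝ) + dist A z₀ < r₁)
    have hfin := final_step him hφlip hballU hγlip hγF hu
      (by rw [hγ0A, hφA]) (by rw [hγ1B, hφB]) hcont
    rw [hnu, ← hLdef] at hfin
    have p1 : L * ((4 * ‖B.1 - A.1‖₊ : NNReal) : ℝ) ≤ L * (8 * L * g u) :=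
      mul_le_mul_of_nonneg_left hKle hL0.le
    have p2 : L * (8 * L * g u) ≤ L * (8 * L * ru ^ 2) :=
      mul_le_mul_of_nonneg_left
        (mul_le_mul_of_nonneg_left hgu2 (by linarith : (0:ℝ) ≤ 8 * L)) hL0.le
    have p2' : L * (8 * L * ru ^ 2) = 8 * (L * L * (ru * ru)) := by ring
    have hm := mul_lt_mul_of_pos_right h4 (by linarith : (0:ℝ) < 2 * ru)
    have hm' : (4 * L ^ 2 + 8 * L) * ru * (2 * ru)
        = 8 * (L * L * (ru * ru)) + 16 * (L * (ru * ru)) := by ring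
    have hnn : (0:ℝ) ≤ 16 * (L * (ru * ru)) :=
      mul_nonneg (by norm_num) (mul_nonneg hL0.le (mul_nonneg hru0.le hru0.le))
    rw [hm'] at hm
    linarith
  · -- opposite branches
    have ha : A.1 < 0 := f_pos_neg hfa
    have hb : B.1 < 0 := f_pos_neg hfb
    have habs1 : |s| = 1 := by rcases hs with h | h <;> simp [h]
    have hsnd : |A.2 - B.2| = f A.1 + f B.1 := by
      rw [hA2, hB2, show s * f A.1 - -s * f B.1 = s * (f A.1 + f B.1) by ring,
        abs_mul, habs1, one_mul,
        abs_of_nonneg (by linarith [f_nonneg A.1, f_nonneg B.1] : (0:ℝ) ≤ f A.1 + f B.1)]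
    have hfaB : f A.1 ≤ L * (2 * g u) := by
      have h := snd_dist_le A B
      rw [hsnd] at h
      linarith [f_nonneg B.1]
    have hfbB : f B.1 ≤ L * (2 * g u) := by
      have h := snd_dist_le A B
      rw [hsnd] at h
      linarith [f_nonneg A.1]
    have key : ∀ x : ℝ, x < 0 → f x ≤ L * (2 * g u) → -x ≤ 2 * u^2 := by
      intro x hx hfx
      have husqpos : (0:ℝ) < u^2 := by
        have h' := mul_pos (neg_pos.mpr hu) (neg_pos.mpr hu)
        nlinarith
      have h2L : (0:ℝ) < 2 * L := by linarith
      have hexp : Real.exp x⁻¹ ≤ Real.exp (Real.log (2 * L) + (-1 / u^2)) := by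
        rw [Real.exp_add, Real.exp_log h2L]
        calc Real.exp x⁻¹ = f x := (f_of_neg hx).symm
          _ ≤ L * (2 * g u) := hfx
          _ = 2 * L * Real.exp (-1 / u^2) := by rw [g_of_neg hu]; ring
      have hlog : x⁻¹ ≤ Real.log (2 * L) - 1 / u^2 := by
        have h := Real.exp_le_exp.mp hexp
        have hdiv : -1 / u^2 = -(1 / u^2) := by ring
        rw [hdiv] at h
        linarith
      have hCle : Real.log (2 * L) ≤ 1 / (2 * u^2) := by
        rw [le_div_iff₀ (by linarith : (0:ℝ) < 2 * u^2)]
        have hlogC : Real.log (2 * L) ≤ C := by rw [hCdef]; exact le_max_left _ _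
        have q1 : Real.log (2 * L) * (2 * u^2) ≤ C * (2 * u^2) :=
          mul_le_mul_of_nonneg_right hlogC (by linarith)
        have q2 : C * (2 * u^2) ≤ C * (2 * ru) :=
          mul_le_mul_of_nonneg_left (by linarith) hC0
        have q3 : (2 * C + 2) * ru = C * (2 * ru) + 2 * ru := by ring
        linarith
      have h12 : 1 / u^2 - 1 / (2 * u^2) = 1 / (2 * u^2) := by
        field_simp
        ring
      have hinv : (2 * u^2)⁻¹ ≤ (-x)⁻¹ := by
        rw [inv_neg]
        rw [← one_div]
        linarith
      have hfin := inv_anti₀ (inv_pos.mpr (by linarith : (0:ℝ) < 2 * u^2)) hinv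
      rwa [inv_inv, inv_inv] at hfin
    have hA1 : -A.1 ≤ 2 * u^2 := key A.1 ha hfaB
    have hB1 : -B.1 ≤ 2 * u^2 := key B.1 hb hfbB
    obtain ⟨γ₁, hγ₁0, hγ₁1, hγ₁c, hγ₁lip⟩ := lip_graph s A.1 0 hs
    have hs' : -s = 1 ∨ -s = -1 := by rcases hs with h | h <;> simp [h]
    obtain ⟨γ₂, hγ₂0, hγ₂1, hγ₂c, hγ₂lip⟩ := lip_graph (-s) 0 B.1 hs'
    set K' : NNReal := (4 * ‖(0:ℝ) - A.1‖₊) ⊔ (4 * ‖B.1 - (0:ℝ)‖₊) with hK'def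
    have hγ₁lip' : LipschitzWith K' γ₁ := hγ₁lip.weaken (le_max_left _ _)
    have hγ₂lip' : LipschitzWith K' γ₂ := hγ₂lip.weaken (le_max_right _ _)
    have hend : γ₁ 1 = γ₂ 0 := by
      rw [hγ₁1, hγ₂0]
      simp [f_of_nonneg (le_refl (0:ℝ))]
    have hγlip := lip_glue hγ₁lip' hγ₂lip' hend
    set γ : ℝ → ℝ × ℝ := fun t => if t ≤ 1/2 then γ₁ (2 * t) else γ₂ (2 * t - 1) with hγdef
    have hγ0A : γ 0 = A := by
      have h : γ 0 = γ₁ 0 := by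
        simp only [hγdef]
        rw [if_pos (by norm_num : (0:ℝ) ≤ 1/2)]
        norm_num
      rw [h, hγ₁0, ← hA2, Prod.mk.eta]
    have hγ1B : γ 1 = B := by
      have h : γ 1 = γ₂ 1 := by
        simp only [hγdef]
        rw [if_neg (by norm_num : ¬ (1:ℝ) ≤ 1/2)]
        norm_num
      rw [h, hγ₂1, ← hB2]
    have hγF : ∀ t, γ t ∈ F := by
      intro t
      by_cases h : t ≤ 1/2
      · have he : γ t = γ₁ (2 * t) := by simp only [hγdef]; rw [if_pos h]
        rw [he]; exact mem_F_of_branch hs (hγ₁c _).2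
      · have he : γ t = γ₂ (2 * t - 1) := by simp only [hγdef]; rw [if_neg h]
        rw [he]; exact mem_F_of_branch hs' (hγ₂c _).2
    have hK'le : (K' : ℝ) ≤ 8 * u^2 := by
      rw [hK'def]
      rw [NNReal.coe_max]
      apply max_le
      · push_cast
        rw [Real.norm_eq_abs, zero_sub, abs_neg, abs_of_neg ha]
        linarith
      · push_cast
        rw [Real.norm_eq_abs, sub_zero, abs_of_neg hb]
        linarith
    have h2K'le : ((2 * K' : NNReal) : ℝ) ≤ 16 * u^2 := by
      push_cast
      linarith
    have hLru : (0:ℝ) ≤ L * ru := mul_nonneg hL0.le hru0.le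
    have e2 : (16 + 9 * L) * ru = 16 * ru + 9 * (L * ru) := by ring
    have hcont := contain_step hγlip hγ0A (by
      rw [e2] at h3; linarith :
      ((2 * K' : NNReal) : ℝ) + dist A z₀ < r₁)
    have hfin := final_step him hφlip hballU hγlip hγF hu
      (by rw [hγ0A, hφA]) (by rw [hγ1B, hφB]) hcont
    rw [hnu, ← hLdef] at hfin
    have p1 : L * ((2 * K' : NNReal) : ℝ) ≤ L * (16 * u ^ 2) :=
      mul_le_mul_of_nonneg_left h2K'le hL0.le
    have p2 : L * (16 * u ^ 2) = 16 * (L * (ru * ru)) := by rw [hu2]; ring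
    have hm := mul_lt_mul_of_pos_right h4 (by linarith : (0:ℝ) < 2 * ru)
    have hm' : (4 * L ^ 2 + 8 * L) * ru * (2 * ru)
        = 8 * (L * L * (ru * ru)) + 16 * (L * (ru * ru)) := by ring
    have hnn : (0:ℝ) ≤ 8 * (L * L * (ru * ru)) :=
      mul_nonneg (by norm_num)
        (mul_nonneg (mul_nonneg hL0.le hL0.le) (mul_nonneg hru0.le hru0.le))
    rw [hm'] at hm
    linarith
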